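/- arXiv:2210.14087 — 8 statements merged into one kernel-verified Lean document; each statement's English description precedes it below -/
import Mathlib

section
/- Let X₁, X₂ be open subsets of complex Banach spaces, φ : X₁ → X₂ holomorphic, and f : X₂ → ℝ ∪ {-∞} strictly plurisubharmonic. If the differential of φ is injective outside a discrete subset of X₁, then f ∘ φ is strictly plurisubharmonic. -/
open MeasureTheory Metric Set
open scoped ENNReal NNReal

/-- The positive part of an extended real, as an extended nonnegative real. -/
noncomputable def erealPos (x : EReal) : ℝ≥0∞ :=
  if x = ⊤ then ⊤ else ENNReal.ofReal x.toReal

/-- Integral of an `EReal`-valued function. -/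
noncomputable def eIntegral {α : Type*} [MeasurableSpace α] (μ : Measure α)
    (g : α → EReal) : EReal :=
  ((∫⁻ a, erealPos (g a) ∂μ : ℝ≥0∞) : EReal) - ((∫⁻ a, erealPos (-(g a)) ∂μ : ℝ≥0∞) : EReal)

/-- The mean of an `EReal`-valued function over `[0, 2π]`. -/
noncomputable def circAvg (g : ℝ → EReal) : EReal :=
  (((2 * Real.pi)⁻¹ : ℝ) : EReal) * eIntegral (volume.restrict (Set.Ioc 0 (2 * Real.pi))) g

/-- `γ` is holomorphic on a neighbourhood of the closed unit disc. -/
def HolOnDisc {E : Type*} [NormedAddCommGroup E] [NormedSpace ℂ E] (γ : ℂ → E) : Prop :=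
  ∃ U : Set ℂ, IsOpen U ∧ closedBall (0 : ℂ) 1 ⊆ U ∧ DifferentiableOn ℂ γ U

/-- `f` is plurisubharmonic on `X`. -/
def PSHOn {E : Type*} [NormedAddCommGroup E] [NormedSpace ℂ E]
    (f : E → EReal) (X : Set E) : Prop :=
  UpperSemicontinuousOn f X ∧
  ∀ γ : ℂ → E, HolOnDisc γ → (∀ z ∈ closedBall (0 : ℂ) 1, γ z ∈ X) →
    f (γ 0) ≤ circAvg (fun t => f (γ (Complex.exp (t * Complex.I))))

/-- `f` is strictly plurisubharmonic on `X`. -/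
def StrictPSHOn {E : Type*} [NormedAddCommGroup E] [NormedSpace ℂ E]
    (f : E → EReal) (X : Set E) : Prop :=
  PSHOn f X ∧
  ∀ γ : ℂ → E, HolOnDisc γ → (∀ z ∈ closedBall (0 : ℂ) 1, γ z ∈ X) →
    ¬ Set.EqOn γ (fun _ => γ 0) (closedBall (0 : ℂ) 1) →
    f (γ 0) < circAvg (fun t => f (γ (Complex.exp (t * Complex.I))))


/-- If `φ ∘ γ` is constant on the closed disc and the differential of `φ` is injective
off a discrete set, then `γ` is constant on the closed disc. -/
theorem gamma_const {E F : Type*}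
    [NormedAddCommGroup E] [NormedSpace ℂ E] [CompleteSpace E]
    [NormedAddCommGroup F] [NormedSpace ℂ F] [CompleteSpace F]
    {X₁ : Set E} (hX₁ : IsOpen X₁)
    {φ : E → F} (hφ : DifferentiableOn ℂ φ X₁)
    {D : Set E} (hD : DiscreteTopology D)
    (hinj : ∀ x ∈ X₁ \ D, Function.Injective (fderiv ℂ φ x))
    {γ : ℂ → E} {U : Set ℂ} (hU : IsOpen U) (hUb : closedBall (0 : ℂ) 1 ⊆ U)
    (hγ : DifferentiableOn ℂ γ U) (hγX : ∀ z ∈ closedBall (0 : ℂ) 1, γ z ∈ X₁)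
    (hconst : Set.EqOn (φ ∘ γ) (fun _ => φ (γ 0)) (closedBall (0 : ℂ) 1)) :
    Set.EqOn γ (fun _ => γ 0) (closedBall (0 : ℂ) 1) := by
  have hball : ball (0 : ℂ) 1 ⊆ U := ball_subset_closedBall.trans hUb
  have hγan : AnalyticOnNhd ℂ γ U := hγ.analyticOnNhd hU
  have hdc : ContinuousOn (deriv γ) U := (hγan.deriv).continuousOn
  -- main claim: deriv γ = 0 on the open ball
  have hzero : ∀ z ∈ ball (0 : ℂ) 1, deriv γ z = 0 := by
    by_contra hcon
    push_neg at hcon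
    obtain ⟨z₀, hz₀b, hz₀⟩ := hcon
    -- auxiliary: at any point of the ball with nonzero derivative, γ must hit D
    have key : ∀ z ∈ ball (0 : ℂ) 1, deriv γ z ≠ 0 → γ z ∈ D := by
      intro z hzb hdz
      by_contra hzD
      have hzX : γ z ∈ X₁ := hγX z (ball_subset_closedBall hzb)
      have hgd : HasDerivAt γ (deriv γ z) z :=
        (hγ.differentiableAt (hU.mem_nhds (hball hzb))).hasDerivAt
      have hφd : HasFDerivAt φ (fderiv ℂ φ (γ z)) (γ z) :=
        (hφ.differentiableAt (hX₁.mem_nhds hzX)).hasFDerivAt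
      have hcomp : HasDerivAt (φ ∘ γ) (fderiv ℂ φ (γ z) (deriv γ z)) z :=
        hφd.comp_hasDerivAt z hgd
      have hev : (φ ∘ γ) =ᶠ[nhds z] (fun _ => φ (γ 0)) := by
        filter_upwards [isOpen_ball.mem_nhds hzb] with w hw
        exact hconst (ball_subset_closedBall hw)
      have h0 : deriv (φ ∘ γ) z = 0 := by
        rw [hev.deriv_eq]; exact deriv_const z _
      have : fderiv ℂ φ (γ z) (deriv γ z) = fderiv ℂ φ (γ z) 0 := by
        rw [map_zero, ← hcomp.deriv, h0]
      exact hdz (hinj (γ z) ⟨hzX, hzD⟩ this)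
    -- so γ z₀ ∈ D; extract an isolating neighbourhood
    have hz₀D : γ z₀ ∈ D := key z₀ hz₀b hz₀
    have hbot := (discreteTopology_subtype_iff.mp hD) (γ z₀) hz₀D
    rw [Filter.inf_principal_eq_bot] at hbot
    obtain ⟨N, hNo, hNd, hND⟩ := mem_nhdsWithin.mp hbot
    -- the open set where deriv γ ≠ 0, intersected with the ball and γ ⁻¹' N
    have hVo : IsOpen (ball (0 : ℂ) 1 ∩ deriv γ ⁻¹' {(0 : E)}ᶜ) :=
      (hdc.mono hball).isOpen_inter_preimage isOpen_ball isOpen_compl_singleton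
    have hWo : IsOpen ((ball (0 : ℂ) 1 ∩ deriv γ ⁻¹' {(0 : E)}ᶜ) ∩ γ ⁻¹' N) :=
      ((hγ.continuousOn.mono (inter_subset_left.trans hball))).isOpen_inter_preimage hVo hNo
    have hz₀W : z₀ ∈ (ball (0 : ℂ) 1 ∩ deriv γ ⁻¹' {(0 : E)}ᶜ) ∩ γ ⁻¹' N :=
      ⟨⟨hz₀b, hz₀⟩, hNd⟩
    -- on W, γ is constantly γ z₀, hence deriv γ z₀ = 0, contradiction
    have hWconst : ∀ w ∈ (ball (0 : ℂ) 1 ∩ deriv γ ⁻¹' {(0 : E)}ᶜ) ∩ γ ⁻¹' N,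
        γ w = γ z₀ := by
      intro w hw
      have hwD : γ w ∈ D := key w hw.1.1 hw.1.2
      by_contra hne
      exact hND (mem_inter hw.2 (by simpa using hne)) hwD
    have hev : γ =ᶠ[nhds z₀] (fun _ => γ z₀) := by
      filter_upwards [hWo.mem_nhds hz₀W] with w hw using hWconst w hw
    have : deriv γ z₀ = 0 := by rw [hev.deriv_eq]; exact deriv_const z₀ _
    exact hz₀ this
  -- deriv γ = 0 on the ball ⇒ fderivWithin = 0 ⇒ γ constant on the ball
  have hfz : ∀ z ∈ ball (0 : ℂ) 1, fderivWithin ℂ γ (ball (0 : ℂ) 1) z = 0 := by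
    intro z hz
    rw [fderivWithin_of_isOpen isOpen_ball hz]
    apply ContinuousLinearMap.ext_ring
    simp [fderiv_apply_one_eq_deriv, hzero z hz]
  have hEqBall : Set.EqOn γ (fun _ => γ 0) (ball (0 : ℂ) 1) := fun z hz =>
    (convex_ball (0 : ℂ) 1).is_const_of_fderivWithin_eq_zero (hγ.mono hball) hfz hz
      (mem_ball_self one_pos)
  have hclos : closedBall (0 : ℂ) 1 ⊆ closure (ball (0 : ℂ) 1) := by
    rw [closure_ball (0 : ℂ) one_ne_zero]
  exact hEqBall.of_subset_closure (hγ.continuousOn.mono hUb) continuousOn_const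
    ball_subset_closedBall hclos

/-- Composition of a strictly plurisubharmonic function with a holomorphic map whose
differential is injective outside a discrete subset is strictly plurisubharmonic. -/
theorem strictPSH_comp {E F : Type*}
    [NormedAddCommGroup E] [NormedSpace ℂ E] [CompleteSpace E]
    [NormedAddCommGroup F] [NormedSpace ℂ F] [CompleteSpace F]
    (X₁ : Set E) (X₂ : Set F) (hX₁ : IsOpen X₁) (hX₂ : IsOpen X₂)
    (φ : E → F) (hφ : DifferentiableOn ℂ φ X₁) (hmaps : Set.MapsTo φ X₁ X₂)
    (f : F → EReal) (hf : StrictPSHOn f X₂)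
    (D : Set E) (hDX : D ⊆ X₁) (hD : DiscreteTopology D)
    (hinj : ∀ x ∈ X₁ \ D, Function.Injective (fderiv ℂ φ x)) :
    StrictPSHOn (f ∘ φ) X₁ := by
  constructor
  · constructor
    · -- upper semicontinuity
      intro x hx y hy
      have hc : ContinuousWithinAt φ X₁ x := (hφ x hx).continuousWithinAt
      have ht : Filter.Tendsto φ (nhdsWithin x X₁) (nhdsWithin (φ x) X₂) :=
        hc.tendsto_nhdsWithin hmaps
      exact ht.eventually (hf.1.1 (φ x) (hmaps hx) y hy)
    · -- mean value inequality
      rintro γ ⟨U, hU, hUb, hγ⟩ hγX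
      have hVo : IsOpen (U ∩ γ ⁻¹' X₁) := hγ.continuousOn.isOpen_inter_preimage hU hX₁
      have hVb : closedBall (0 : ℂ) 1 ⊆ U ∩ γ ⁻¹' X₁ := fun z hz => ⟨hUb hz, hγX z hz⟩
      have hcomp : DifferentiableOn ℂ (φ ∘ γ) (U ∩ γ ⁻¹' X₁) :=
        hφ.comp (hγ.mono inter_subset_left) (fun z hz => hz.2)
      exact hf.1.2 (φ ∘ γ) ⟨U ∩ γ ⁻¹' X₁, hVo, hVb, hcomp⟩
        (fun z hz => hmaps (hγX z hz))
  · -- strictness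
    rintro γ ⟨U, hU, hUb, hγ⟩ hγX hne
    have hVo : IsOpen (U ∩ γ ⁻¹' X₁) := hγ.continuousOn.isOpen_inter_preimage hU hX₁
    have hVb : closedBall (0 : ℂ) 1 ⊆ U ∩ γ ⁻¹' X₁ := fun z hz => ⟨hUb hz, hγX z hz⟩
    have hcomp : DifferentiableOn ℂ (φ ∘ γ) (U ∩ γ ⁻¹' X₁) :=
      hφ.comp (hγ.mono inter_subset_left) (fun z hz => hz.2)
    have hne' : ¬ Set.EqOn (φ ∘ γ) (fun _ => (φ ∘ γ) 0) (closedBall (0 : ℂ) 1) := by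
      intro h
      exact hne (gamma_const hX₁ hφ hD hinj hU hUb hγ hγX h)
    exact hf.2 (φ ∘ γ) ⟨U ∩ γ ⁻¹' X₁, hVo, hVb, hcomp⟩
      (fun z hz => hmaps (hγX z hz)) hne'
end

section
/- Let f : ℂ → ℝ ∪ {-∞} be a strictly plurisubharmonic function, let π : ℂ² → ℂ be the second projection, and let φ : ℂ² → ℂ² be the biholomorphism φ(z₁,z₂) = (z₁, z₁² + z₂). Then for every non-constant complex affine map γ : ℂ → ℂ², the mean-value inequality for f ∘ π ∘ φ along γ is strict: (f∘π∘φ)(γ(0)) < (1/2π)∫₀^{2π} (f∘π∘φ)(γ(e^{it})) dt; yet f ∘ π ∘ φ is not strictly plurisubharmonic (its composition with the holomorphic map z ↦ (z, -z²) is constant). -/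
open MeasureTheory Metric Set
open scoped ENNReal NNReal

lemma twopi_pos : (0:ℝ) < 2 * Real.pi := by positivity

lemma circAvg_const (c : EReal) : circAvg (fun _ => c) = c := by
  have hπ : (0:ℝ) < 2 * Real.pi := twopi_pos
  have hμ : (volume.restrict (Set.Ioc (0:ℝ) (2 * Real.pi))) Set.univ
      = ENNReal.ofReal (2 * Real.pi) := by
    rw [Measure.restrict_apply_univ, Real.volume_Ioc, sub_zero]
  have hμ0 : (volume.restrict (Set.Ioc (0:ℝ) (2 * Real.pi))) Set.univ ≠ 0 := by
    rw [hμ]; simp [ENNReal.ofReal_eq_zero, not_le, hπ, Real.pi_pos]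
  have hμt : (volume.restrict (Set.Ioc (0:ℝ) (2 * Real.pi))) Set.univ ≠ ⊤ := by
    rw [hμ]; exact ENNReal.ofReal_ne_top
  have hinvpos : (0:EReal) < (((2 * Real.pi)⁻¹ : ℝ) : EReal) := by
    exact_mod_cast EReal.coe_pos.2 (by positivity)
  unfold circAvg eIntegral
  rw [lintegral_const, lintegral_const]
  induction c using EReal.rec with
  | bot =>
    have h1 : erealPos (⊥ : EReal) = 0 := by simp [erealPos]
    have h2 : erealPos (-(⊥ : EReal)) = ⊤ := by simp [erealPos]
    rw [h1, h2, zero_mul, ENNReal.top_mul hμ0]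
    rw [EReal.coe_ennreal_zero, EReal.coe_ennreal_top]
    rw [sub_eq_add_neg, zero_add]
    simp only [EReal.neg_top]
    exact EReal.mul_bot_of_pos hinvpos
  | top =>
    have h1 : erealPos (⊤ : EReal) = ⊤ := by simp [erealPos]
    have h2 : erealPos (-(⊤ : EReal)) = 0 := by simp [erealPos]
    rw [h1, h2, zero_mul, ENNReal.top_mul hμ0]
    rw [EReal.coe_ennreal_zero, EReal.coe_ennreal_top, sub_zero]
    exact EReal.mul_top_of_pos hinvpos
  | coe r =>
    have hne : ((r:ℝ) : EReal) ≠ ⊤ := EReal.coe_ne_top r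
    have hne' : (-((r:ℝ) : EReal)) ≠ ⊤ := by
      rw [← EReal.coe_neg]; exact EReal.coe_ne_top _
    have h1 : erealPos ((r:ℝ) : EReal) = ENNReal.ofReal r := by
      simp [erealPos, hne]
    have h2 : erealPos (-((r:ℝ) : EReal)) = ENNReal.ofReal (-r) := by
      rw [erealPos, if_neg hne', ← EReal.coe_neg, EReal.toReal_coe]
    rw [h1, h2, hμ]
    rw [← ENNReal.ofReal_mul' hπ.le, ← ENNReal.ofReal_mul' hπ.le]
    rw [EReal.coe_ennreal_ofReal, EReal.coe_ennreal_ofReal]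
    rw [← EReal.coe_sub, ← EReal.coe_mul]
    norm_cast
    have h2π : (2 * Real.pi) ≠ 0 := ne_of_gt hπ
    rcases le_total 0 r with h | h
    · rw [max_eq_left (by nlinarith), max_eq_right (by nlinarith)]
      field_simp
      ring
    · rw [max_eq_right (by nlinarith), max_eq_left (by nlinarith)]
      field_simp
      ring

lemma holOnDisc_of_diff {γ : ℂ → ℂ} (h : Differentiable ℂ γ) : HolOnDisc γ :=
  ⟨Set.univ, isOpen_univ, Set.subset_univ _, h.differentiableOn⟩

/-- Strictness of the mean-value inequality along all non-constant affine maps does not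
imply strict plurisubharmonicity: the function `f ∘ π ∘ φ`, where `π` is the second
projection and `φ (z₁, z₂) = (z₁, z₁² + z₂)`, satisfies the strict sub-mean-value
inequality along every non-constant affine map, yet it is not strictly
plurisubharmonic since its composition with `z ↦ (z, -z²)` is constant. -/
theorem carmignani_counterexample (f : ℂ → EReal) (hf : StrictPSHOn f Set.univ) :
    (∀ a b c d : ℂ, ¬ (a = 0 ∧ c = 0) →
      ∀ γ : ℂ → ℂ × ℂ, γ = (fun z => (a * z + b, c * z + d)) →
        f ((γ 0).1 ^ 2 + (γ 0).2) <
          circAvg (fun t =>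
            f ((γ (Complex.exp (t * Complex.I))).1 ^ 2 +
               (γ (Complex.exp (t * Complex.I))).2))) ∧
    (∀ z : ℂ, f ((z : ℂ) ^ 2 + (-(z ^ 2))) = f 0) ∧
    ¬ StrictPSHOn (fun p : ℂ × ℂ => f (p.1 ^ 2 + p.2)) Set.univ := by
  refine ⟨?_, ?_, ?_⟩
  · intro a b c d hnab γ hγ
    subst hγ
    set γ' : ℂ → ℂ := fun z => (a * z + b) ^ 2 + (c * z + d) with hγ'
    have hhol : HolOnDisc γ' := by
      apply holOnDisc_of_diff
      fun_prop
    have hne : ¬ Set.EqOn γ' (fun _ => γ' 0) (closedBall (0 : ℂ) 1) := by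
      intro h
      have h1 : γ' 1 = γ' 0 := h (by simp [mem_closedBall])
      have h2 : γ' (-1) = γ' 0 := by
        have : (-1 : ℂ) ∈ closedBall (0:ℂ) 1 := by
          simp [mem_closedBall]
        exact h this
      simp only [hγ'] at h1 h2
      have ha : a = 0 := by
        have h3 : a ^ 2 = 0 := by linear_combination (h1 + h2) / 2
        exact pow_eq_zero_iff (n := 2) (by norm_num) |>.1 h3
      have hc : c = 0 := by
        subst ha
        linear_combination h1
      exact hnab ⟨ha, hc⟩
    have := hf.2 γ' hhol (fun z _ => Set.mem_univ _) hne
    simpa [γ'] using this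
  · intro z
    simp
  · intro h
    set γ : ℂ → ℂ × ℂ := fun z => (z, -(z ^ 2)) with hγ
    have hhol : HolOnDisc γ :=
      ⟨Set.univ, isOpen_univ, Set.subset_univ _, (by fun_prop : Differentiable ℂ γ).differentiableOn⟩
    have hne : ¬ Set.EqOn γ (fun _ => γ 0) (closedBall (0 : ℂ) 1) := by
      intro h'
      have h1 : γ 1 = γ 0 := h' (by simp [mem_closedBall])
      simp [hγ, Prod.ext_iff] at h1
    have hlt := h.2 γ hhol (fun z _ => Set.mem_univ _) hne
    simp only [hγ] at hlt
    have heq : (fun t : ℝ => f ((Complex.exp (t * Complex.I)) ^ 2 + -(Complex.exp (t * Complex.I)) ^ 2)) = fun _ => f 0 := by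
      funext t; ring_nf
    simp only [add_neg_cancel] at hlt
    rw [circAvg_const] at hlt
    simp at hlt
end

section
/- Jensen's inequality with equality case: let E be a real Banach space, X ⊆ E a convex open set, f : X → ℝ a continuous convex function, (S,Σ,μ) a probability measure space, and η : S → E a Bochner-integrable map with values in X. Then ∫η dμ ∈ X and f(∫η dμ) ≤ ∫ f∘η dμ. If equality holds and f is strictly convex, then η is constant almost everywhere. -/
open MeasureTheory Set

/-- **Jensen's inequality with equality case.**
For a continuous convex function `f` on a convex open subset `X` of a real Banach space
and a Bochner-integrable map `η` on a probability space with values in `X`, the mean of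
`η` lies in `X` and `f` of the mean is at most the mean of `f ∘ η`; when equality holds
and `f` is strictly convex, `η` is a.e. constant. -/
theorem jensen_inequality {E : Type*} [NormedAddCommGroup E] [NormedSpace ℝ E]
    [CompleteSpace E]
    (X : Set E) (hXo : IsOpen X) (hXc : Convex ℝ X)
    (f : E → ℝ) (hfc : ContinuousOn f X) (hf : ConvexOn ℝ X f)
    {S : Type*} [MeasurableSpace S] (μ : Measure S) [IsProbabilityMeasure μ]
    (η : S → E) (hη : Integrable η μ) (hmem : ∀ s, η s ∈ X)
    (hfη : Integrable (f ∘ η) μ) :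
    (∫ s, η s ∂μ) ∈ X ∧
    f (∫ s, η s ∂μ) ≤ ∫ s, f (η s) ∂μ ∧
    (StrictConvexOn ℝ X f → f (∫ s, η s ∂μ) = ∫ s, f (η s) ∂μ →
      ∀ᵐ s ∂μ, η s = ∫ t, η t ∂μ) := by
  set y := ∫ s, η s ∂μ with hy
  have hfη' : Integrable (fun s => f (η s)) μ := hfη
  have hcomm : ∀ l : E →L[ℝ] ℝ, ∫ s, l (η s) ∂μ = l y := fun l =>
    l.integral_comp_comm hη
  have hintl : ∀ l : E →L[ℝ] ℝ, Integrable (fun s => l (η s)) μ := fun l =>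
    l.integrable_comp hη
  -- Step 1: the mean lies in `X`.
  have hyX : y ∈ X := by
    by_contra hyX
    obtain ⟨l, hl⟩ := geometric_hahn_banach_open_point hXc hXo hyX
    have h0 : ∫ s, (l y - l (η s)) ∂μ = 0 := by
      rw [integral_sub (integrable_const _) (hintl l), hcomm l, integral_const]
      simp
    have hae : ∀ᵐ s ∂μ, l y - l (η s) = 0 :=
      (integral_eq_zero_iff_of_nonneg (fun s => sub_nonneg.2 (hl _ (hmem s)).le)
        ((integrable_const _).sub (hintl l))).1 h0
    have hfalse : ∀ᵐ _s ∂μ, False :=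
      hae.mono fun s hs => (sub_pos.2 (hl _ (hmem s))).ne' hs
    obtain ⟨_, h⟩ := hfalse.exists
    exact h
  -- Step 2: a subgradient of `f` at `y` via Hahn-Banach on the strict epigraph.
  set U : Set (E × ℝ) := {p : E × ℝ | p.1 ∈ X ∧ f p.1 < p.2} with hU
  have hUconv : Convex ℝ U := by
    rintro ⟨p1, p2⟩ ⟨hp1, hp2⟩ ⟨q1, q2⟩ ⟨hq1, hq2⟩ a b ha hb hab
    refine ⟨hXc hp1 hq1 ha hb hab, ?_⟩
    calc f (a • p1 + b • q1) ≤ a * f p1 + b * f q1 := hf.2 hp1 hq1 ha hb hab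
    _ < a * p2 + b * q2 := by
        rcases ha.lt_or_eq with ha' | ha'
        · rcases hb.lt_or_eq with hb' | hb'
          · exact add_lt_add ((mul_lt_mul_iff_right₀ ha').2 hp2) ((mul_lt_mul_iff_right₀ hb').2 hq2)
          · have h1 : a = 1 := by linarith
            simp only [← hb', h1]
            simpa using hp2
        · have h1 : b = 1 := by linarith
          simp only [← ha', h1]
          simpa using hq2
  have hUopen : IsOpen U := by
    have hEq : U = (X ×ˢ (univ : Set ℝ)) ∩ (fun p : E × ℝ => p.2 - f p.1) ⁻¹' Ioi 0 := by
      ext p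
      simp only [hU, mem_setOf_eq, mem_inter_iff, mem_prod, mem_univ, and_true,
        mem_preimage, mem_Ioi, sub_pos]
    rw [hEq]
    exact ContinuousOn.isOpen_inter_preimage
      (continuous_snd.continuousOn.sub
        (hfc.comp continuous_fst.continuousOn fun p hp => hp.1))
      (hXo.prod isOpen_univ) isOpen_Ioi
  have hyU : ((y, f y) : E × ℝ) ∉ U := fun h => lt_irrefl _ h.2
  obtain ⟨L, hL⟩ := geometric_hahn_banach_open_point hUconv hUopen hyU
  set g : E →L[ℝ] ℝ := L.comp (ContinuousLinearMap.inl ℝ E ℝ) with hg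
  set c : ℝ := L (0, 1) with hc
  have hLdecomp : ∀ (x : E) (t : ℝ), L (x, t) = g x + t * c := by
    intro x t
    have h1 : ((x, t) : E × ℝ) = (x, 0) + t • ((0 : E), (1 : ℝ)) := by
      simp [Prod.ext_iff]
    rw [h1, map_add, L.map_smul]
    simp [hg, hc, smul_eq_mul]
  have hcneg : c < 0 := by
    have h1 := hL (y, f y + 1) ⟨hyX, by show f y < f y + 1; linarith⟩
    rw [hLdecomp] at h1
    have h2 : L (y, f y) = g y + f y * c := hLdecomp y (f y)
    linarith
  have hc0 : c ≠ 0 := hcneg.ne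
  -- The key subgradient inequality.
  have key : ∀ x ∈ X, g x + c * f x ≤ g y + c * f y := by
    intro x hx
    by_contra hcon
    push_neg at hcon
    set D : ℝ := g x + c * f x - (g y + c * f y) with hD
    have hDpos : 0 < D := by linarith
    set ε : ℝ := D / (-c) with hε
    have hεpos : 0 < ε := div_pos hDpos (by linarith)
    have h1 := hL (x, f x + ε) ⟨hx, by show f x < f x + ε; linarith⟩
    rw [hLdecomp] at h1
    have h2 : L (y, f y) = g y + f y * c := hLdecomp y (f y)
    have h3 : ε * c = -D := by
      rw [hε, div_neg, neg_mul, div_mul_cancel₀ _ hc0]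
    linarith
  set k : ℝ := (-c)⁻¹ with hk
  have hkpos : 0 < k := inv_pos.2 (by linarith)
  have hkc : k * c = -1 := by
    rw [hk, ← div_eq_inv_mul, div_neg, div_self hc0]
  have hlow : ∀ x ∈ X, f y + k * (g x - g y) ≤ f x := by
    intro x hx
    have h1 := mul_le_mul_of_nonneg_left (key x hx) hkpos.le
    have e1 : k * (c * f x) = -f x := by rw [← mul_assoc, hkc]; ring
    have e2 : k * (c * f y) = -f y := by rw [← mul_assoc, hkc]; ring
    nlinarith
  have hint2 : Integrable (fun s => k * (g (η s) - g y)) μ := by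
    apply Integrable.const_mul
    exact (hintl g).sub (integrable_const _)
  have hint1 : Integrable (fun s => f y + k * (g (η s) - g y)) μ :=
    (integrable_const _).add hint2
  have hcalc : ∫ s, (f y + k * (g (η s) - g y)) ∂μ = f y := by
    have hsub : Integrable (fun s => g (η s) - g y) μ := (hintl g).sub (integrable_const _)
    rw [integral_add (integrable_const _) hint2, integral_const,
      integral_const_mul _ _, integral_sub (hintl g) (integrable_const _),
      hcomm g, integral_const]
    simp
  have hfyle : f y ≤ ∫ s, f (η s) ∂μ := by
    have hmono := integral_mono hint1 hfη' fun s => hlow _ (hmem s)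
    rwa [hcalc] at hmono
  refine ⟨hyX, hfyle, fun hsf heq => ?_⟩
  -- Equality case.
  have hφint : Integrable (fun s => f (η s) - (f y + k * (g (η s) - g y))) μ :=
    hfη'.sub hint1
  have hφ0 : ∫ s, (f (η s) - (f y + k * (g (η s) - g y))) ∂μ = 0 := by
    rw [integral_sub hfη' hint1, hcalc, ← heq]
    ring
  have hφae : ∀ᵐ s ∂μ, f (η s) - (f y + k * (g (η s) - g y)) = 0 :=
    (integral_eq_zero_iff_of_nonneg (fun s => sub_nonneg.2 (hlow _ (hmem s))) hφint).1 hφ0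
  filter_upwards [hφae] with s hs
  by_contra hne
  have hmid : f ((1 / 2 : ℝ) • η s + (1 / 2 : ℝ) • y) <
      (1 / 2 : ℝ) * f (η s) + (1 / 2 : ℝ) * f y :=
    hsf.2 (hmem s) hyX hne (by norm_num) (by norm_num) (by norm_num)
  have hmX : ((1 / 2 : ℝ) • η s + (1 / 2 : ℝ) • y) ∈ X :=
    hXc (hmem s) hyX (by norm_num) (by norm_num) (by norm_num)
  have hgm : g ((1 / 2 : ℝ) • η s + (1 / 2 : ℝ) • y)
      = (1 / 2 : ℝ) * g (η s) + (1 / 2 : ℝ) * g y := by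
    rw [map_add, g.map_smul, g.map_smul]
    simp [smul_eq_mul]
  have h1 := hlow _ hmX
  rw [hgm] at h1
  nlinarith
end

section
/- For a normed real vector space (E, ‖·‖) the following are equivalent: (1) every affine map γ : [-1,1] → E whose image lies in the unit sphere is constant; (2) for every increasing strictly convex map ψ : ℝ₊ → ℝ, the composition ψ ∘ ‖·‖ is strictly convex on E; (3) there exists an increasing strictly convex map ψ : ℝ₊ → ℝ such that ψ ∘ ‖·‖ is strictly convex on E. -/
open Set

private lemma psi_strictMono {ψ : ℝ → ℝ} (hm : MonotoneOn ψ (Ici (0:ℝ)))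
    (hc : StrictConvexOn ℝ (Ici (0:ℝ)) ψ) : StrictMonoOn ψ (Ici (0:ℝ)) := by
  intro s hs t ht hst
  by_contra h
  push_neg at h
  have hmid : ψ ((1/2 : ℝ) • s + (1/2 : ℝ) • t) < (1/2) * ψ s + (1/2) * ψ t :=
    hc.2 hs ht (ne_of_lt hst) (by norm_num) (by norm_num) (by norm_num)
  have hs2 : s ≤ (1/2 : ℝ) • s + (1/2 : ℝ) • t := by simp only [smul_eq_mul]; linarith
  have hmem : (1/2 : ℝ) • s + (1/2 : ℝ) • t ∈ Ici (0:ℝ) := by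
    simp only [smul_eq_mul, mem_Ici] at *; linarith
  have := hm hs hmem hs2
  linarith

private lemma aux12 {E : Type*} [NormedAddCommGroup E] [NormedSpace ℝ E]
    (h1 : ∀ v w : E, (∀ t ∈ Icc (-1 : ℝ) 1, ‖v + t • w‖ = 1) → w = 0)
    (ψ : ℝ → ℝ) (hm : MonotoneOn ψ (Ici (0:ℝ))) (hc : StrictConvexOn ℝ (Ici (0:ℝ)) ψ) :
    StrictConvexOn ℝ Set.univ (fun x : E => ψ ‖x‖) := by
  have hsm := psi_strictMono hm hc
  refine ⟨convex_univ, ?_⟩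
  intro x _ y _ hxy a b ha hb hab
  show ψ ‖a • x + b • y‖ < a * ψ ‖x‖ + b * ψ ‖y‖
  have hxn : (0:ℝ) ≤ ‖x‖ := norm_nonneg x
  have hyn : (0:ℝ) ≤ ‖y‖ := norm_nonneg y
  have htri : ‖a • x + b • y‖ ≤ a * ‖x‖ + b * ‖y‖ := by
    calc ‖a • x + b • y‖ ≤ ‖a • x‖ + ‖b • y‖ := norm_add_le _ _
    _ = a * ‖x‖ + b * ‖y‖ := by
        rw [norm_smul, norm_smul, Real.norm_of_nonneg ha.le, Real.norm_of_nonneg hb.le]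
  have hbound_mem : a * ‖x‖ + b * ‖y‖ ∈ Ici (0:ℝ) := by
    rw [mem_Ici]; positivity
  have hmem : ‖a • x + b • y‖ ∈ Ici (0:ℝ) := norm_nonneg _
  have hconvle : ψ (a * ‖x‖ + b * ‖y‖) ≤ a * ψ ‖x‖ + b * ψ ‖y‖ := by
    rcases eq_or_ne ‖x‖ ‖y‖ with h | h
    · rw [h]
      have : a * ‖y‖ + b * ‖y‖ = ‖y‖ := by rw [← add_mul, hab, one_mul]
      rw [this, ← add_mul, hab, one_mul]
    · exact (hc.2 hxn hyn h ha hb hab).le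
  rcases lt_or_eq_of_le htri with hlt | heq
  · calc ψ ‖a • x + b • y‖ < ψ (a * ‖x‖ + b * ‖y‖) := hsm hmem hbound_mem hlt
      _ ≤ a * ψ ‖x‖ + b * ψ ‖y‖ := hconvle
  · rcases eq_or_ne ‖x‖ ‖y‖ with h | h
    · -- hard case: equality in triangle and equal norms, contradiction with h1
      exfalso
      set r := ‖y‖ with hr
      have hrpos : 0 < r := by
        rcases lt_or_eq_of_le hyn with h' | h'
        · exact h'
        · exfalso
          apply hxy
          have hy0 : y = 0 := norm_eq_zero.mp h'.symm
          have hx0 : x = 0 := norm_eq_zero.mp (by rw [h]; exact h'.symm)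
          rw [hx0, hy0]
      have hgab : ‖a • x + b • y‖ = r := by
        rw [heq, h, ← add_mul, hab, one_mul]
      -- key claim
      have key : ∀ s : ℝ, s ∈ Icc (0:ℝ) 1 → ‖s • x + (1 - s) • y‖ = r := by
        intro s hs
        obtain ⟨hs0, hs1⟩ := hs
        have hupper : ‖s • x + (1 - s) • y‖ ≤ r := by
          calc ‖s • x + (1 - s) • y‖ ≤ ‖s • x‖ + ‖(1 - s) • y‖ := norm_add_le _ _
          _ = s * r + (1 - s) * r := by
              rw [norm_smul, norm_smul, Real.norm_of_nonneg hs0,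
                Real.norm_of_nonneg (by linarith), h, hr]
          _ = r := by ring
        have hlower : r ≤ ‖s • x + (1 - s) • y‖ := by
          rcases le_or_gt s a with hsa | has
          · -- s ≤ a < 1, θ = b/(1-s)
            have hs1' : s < 1 := lt_of_le_of_lt hsa (by linarith)
            set θ := b / (1 - s) with hθ
            have hθpos : 0 < θ := div_pos hb (by linarith)
            have hθ1 : θ ≤ 1 := by
              rw [div_le_one (by linarith)]; linarith
            have hθs : θ * (1 - s) = b := div_mul_cancel₀ b (by linarith : (1:ℝ) - s ≠ 0)
            have hdecomp : a • x + b • y = θ • (s • x + (1 - s) • y) + (1 - θ) • x := by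
              have hax : a = θ * s + (1 - θ) := by nlinarith
              rw [smul_add, smul_smul, smul_smul, hθs, hax, add_smul]
              abel
            have hle : r ≤ θ * ‖s • x + (1 - s) • y‖ + (1 - θ) * r := by
              calc r = ‖a • x + b • y‖ := hgab.symm
              _ ≤ ‖θ • (s • x + (1 - s) • y)‖ + ‖(1 - θ) • x‖ := by
                  rw [hdecomp]; exact norm_add_le _ _
              _ = θ * ‖s • x + (1 - s) • y‖ + (1 - θ) * r := by
                  rw [norm_smul, norm_smul, Real.norm_of_nonneg hθpos.le,
                    Real.norm_of_nonneg (by linarith), h, hr]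
            nlinarith [hθpos]
          · -- a < s, θ = a/s
            have hspos : 0 < s := lt_trans ha has
            set θ := a / s with hθ
            have hθpos : 0 < θ := div_pos ha hspos
            have hθ1 : θ ≤ 1 := by rw [div_le_one hspos]; linarith
            have hθs : θ * s = a := div_mul_cancel₀ a hspos.ne'
            have hdecomp : a • x + b • y = θ • (s • x + (1 - s) • y) + (1 - θ) • y := by
              have hby : b = θ * (1 - s) + (1 - θ) := by nlinarith
              rw [smul_add, smul_smul, smul_smul, hθs, hby, add_smul]
              abel
            have hle : r ≤ θ * ‖s • x + (1 - s) • y‖ + (1 - θ) * r := by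
              calc r = ‖a • x + b • y‖ := hgab.symm
              _ ≤ ‖θ • (s • x + (1 - s) • y)‖ + ‖(1 - θ) • y‖ := by
                  rw [hdecomp]; exact norm_add_le _ _
              _ = θ * ‖s • x + (1 - s) • y‖ + (1 - θ) * r := by
                  rw [norm_smul, norm_smul, Real.norm_of_nonneg hθpos.le,
                    Real.norm_of_nonneg (by linarith), hr]
            nlinarith [hθpos]
        linarith
      -- apply h1
      have hw := h1 ((2 * r)⁻¹ • (x + y)) ((2 * r)⁻¹ • (x - y)) ?_
      · have h2r : ((2 * r)⁻¹ : ℝ) ≠ 0 := by positivity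
        rw [smul_eq_zero, sub_eq_zero] at hw
        rcases hw with h' | h'
        · exact h2r h'
        · exact hxy h'
      · intro t ht
        obtain ⟨ht0, ht1⟩ := ht
        have hsmem : (1 + t) / 2 ∈ Icc (0:ℝ) 1 := ⟨by linarith, by linarith⟩
        have hk := key ((1 + t) / 2) hsmem
        have heq2 : (2 * r)⁻¹ • (x + y) + t • ((2 * r)⁻¹ • (x - y))
            = ((2*r)⁻¹ * 2) • (((1 + t) / 2) • x + (1 - (1 + t) / 2) • y) := by
          simp only [smul_add, smul_sub, smul_smul]
          module
        rw [heq2, norm_smul, Real.norm_of_nonneg (by positivity), hk]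
        field_simp
    · rw [heq]
      exact hc.2 hxn hyn h ha hb hab

private lemma aux31 {E : Type*} [NormedAddCommGroup E] [NormedSpace ℝ E]
    (ψ : ℝ → ℝ) (hsc : StrictConvexOn ℝ Set.univ (fun x : E => ψ ‖x‖)) :
    ∀ v w : E, (∀ t ∈ Icc (-1 : ℝ) 1, ‖v + t • w‖ = 1) → w = 0 := by
  intro v w hvw
  by_contra hw
  have hxy : v + (-1 : ℝ) • w ≠ v + (1 : ℝ) • w := by
    intro h
    apply hw
    have h2 := add_left_cancel h
    rw [neg_one_smul, one_smul] at h2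
    have h3 : w + w = 0 := by nth_rewrite 1 [← h2]; exact neg_add_cancel w
    have h4 : (2 : ℝ) • w = 0 := by rw [two_smul]; exact h3
    rcases smul_eq_zero.mp h4 with h' | h'
    · norm_num at h'
    · exact h'
  have hlt := hsc.2 (mem_univ (v + (-1 : ℝ) • w)) (mem_univ (v + (1 : ℝ) • w)) hxy
    (by norm_num : (0:ℝ) < 1/2) (by norm_num : (0:ℝ) < 1/2) (by norm_num)
  have hmid : (1/2 : ℝ) • (v + (-1:ℝ) • w) + (1/2 : ℝ) • (v + (1:ℝ) • w) = v + (0:ℝ) • w := by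
    module
  rw [hmid] at hlt
  simp only [smul_eq_mul] at hlt
  rw [hvw (-1) (Set.mem_Icc.mpr (by norm_num)), hvw 1 (Set.mem_Icc.mpr (by norm_num)),
    hvw 0 (Set.mem_Icc.mpr (by norm_num))] at hlt
  linarith

private lemma sq_mono : MonotoneOn (fun x : ℝ => x ^ 2) (Ici (0:ℝ)) := by
  intro s hs t ht hst
  exact pow_le_pow_left₀ hs hst 2

/-- **Characterisations of strict convexity of a normed real vector space.**
The following are equivalent: (1) every affine map `[-1, 1] → E` with image in the unit
sphere is constant; (2) for every increasing strictly convex `ψ : ℝ₊ → ℝ`, the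
composition `ψ ∘ ‖·‖` is strictly convex; (3) there exists such a `ψ`. -/
theorem strictly_convex_tfae {E : Type*} [NormedAddCommGroup E] [NormedSpace ℝ E] :
    ((∀ v w : E, (∀ t ∈ Icc (-1 : ℝ) 1, ‖v + t • w‖ = 1) → w = 0) ↔
      (∀ ψ : ℝ → ℝ, MonotoneOn ψ (Ici (0 : ℝ)) → StrictConvexOn ℝ (Ici (0 : ℝ)) ψ →
        StrictConvexOn ℝ Set.univ (fun x : E => ψ ‖x‖))) ∧
    ((∀ ψ : ℝ → ℝ, MonotoneOn ψ (Ici (0 : ℝ)) → StrictConvexOn ℝ (Ici (0 : ℝ)) ψ →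
        StrictConvexOn ℝ Set.univ (fun x : E => ψ ‖x‖)) ↔
      (∃ ψ : ℝ → ℝ, MonotoneOn ψ (Ici (0 : ℝ)) ∧ StrictConvexOn ℝ (Ici (0 : ℝ)) ψ ∧
        StrictConvexOn ℝ Set.univ (fun x : E => ψ ‖x‖))) := by
  constructor
  · constructor
    · exact fun h1 ψ hm hc => aux12 h1 ψ hm hc
    · intro h2
      exact aux31 (fun x : ℝ => x ^ 2)
        (h2 _ sq_mono (strictConvexOn_pow (le_refl 2)))
  · constructor
    · intro h2
      exact ⟨_, sq_mono, strictConvexOn_pow (le_refl 2),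
        h2 _ sq_mono (strictConvexOn_pow (le_refl 2))⟩
    · rintro ⟨ψ, hm, hc, hsc⟩ ψ' hm' hc'
      exact aux12 (aux31 ψ hsc) ψ' hm' hc'
end

section
/- Every complex Banach space (E, ‖·‖) that is strictly convex as a real Banach space is strictly plurisubharmonic: every holomorphic map γ : D̄ → E whose image lies in the unit sphere is constant. -/
open MeasureTheory Metric Set

/-- A real-valued function is plurisubharmonic on `X` if it satisfies the sub-mean-value
inequality along every holomorphic map from the closed unit disc into `X`. -/
def PSHROn {E : Type*} [NormedAddCommGroup E] [NormedSpace ℂ E]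
    (f : E → ℝ) (X : Set E) : Prop :=
  ∀ γ : ℂ → E, HolOnDisc γ → (∀ z ∈ closedBall (0 : ℂ) 1, γ z ∈ X) →
    f (γ 0) ≤ (2 * Real.pi)⁻¹ *
      ∫ t in (0 : ℝ)..(2 * Real.pi), f (γ (Complex.exp (t * Complex.I)))

/-- A real-valued function is strictly plurisubharmonic on `X` if moreover the
sub-mean-value inequality is strict along every non-constant such map. -/
def StrictPSHROn {E : Type*} [NormedAddCommGroup E] [NormedSpace ℂ E]
    (f : E → ℝ) (X : Set E) : Prop :=
  PSHROn f X ∧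
  ∀ γ : ℂ → E, HolOnDisc γ → (∀ z ∈ closedBall (0 : ℂ) 1, γ z ∈ X) →
    ¬ Set.EqOn γ (fun _ => γ 0) (closedBall (0 : ℂ) 1) →
    f (γ 0) < (2 * Real.pi)⁻¹ *
      ∫ t in (0 : ℝ)..(2 * Real.pi), f (γ (Complex.exp (t * Complex.I)))

/-! A norm-one functional `φ` with `φ (γ 0) = 1` turns `φ ∘ γ` into a holomorphic function of
modulus at most one attaining the value one at the centre, so by the maximum modulus principle
`φ (γ z) = 1` on the whole disc. Then `‖γ z + γ 0‖ = 2`, and strict convexity forces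
`γ z = γ 0`. -/

theorem strictConvexSpace_of_segment_sphere {E : Type*} [NormedAddCommGroup E] [NormedSpace ℝ E]
    (h : ∀ v w : E, (∀ t ∈ Icc (-1 : ℝ) 1, ‖v + t • w‖ = 1) → w = 0) :
    StrictConvexSpace ℝ E := by
  refine StrictConvexSpace.of_norm_combo_ne_one fun x y _ _ hxy => ?_
  by_contra! hcombo
  -- `v + t • w` runs through the segment `[y, x]` as `t` runs through `[-1, 1]`.
  have hw := h ((2 : ℝ)⁻¹ • (x + y)) ((2 : ℝ)⁻¹ • (x - y)) fun t ⟨ht₁, ht₂⟩ => by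
    convert hcombo ((1 + t) / 2) ((1 - t) / 2) (by linarith) (by linarith) (by ring) using 2
    module
  exact hxy (sub_eq_zero.mp ((smul_eq_zero.mp hw).resolve_left (by norm_num)))

theorem norm_add_eq_of_apply_eq_norm {𝕜 E : Type*} [RCLike 𝕜] [NormedAddCommGroup E]
    [NormedSpace 𝕜 E] {φ : StrongDual 𝕜 E} (hφ : ‖φ‖ ≤ 1) {x y : E} (hx : φ x = ‖x‖)
    (hy : φ y = ‖y‖) : ‖x + y‖ = ‖x‖ + ‖y‖ := by
  refine (norm_add_le x y).antisymm ?_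
  calc ‖x‖ + ‖y‖ = ‖φ (x + y)‖ := by
        rw [map_add, hx, hy, ← RCLike.ofReal_add, RCLike.norm_ofReal,
          abs_of_nonneg (by positivity)]
    _ ≤ ‖φ‖ * ‖x + y‖ := φ.le_opNorm _
    _ ≤ ‖x + y‖ := mul_le_of_le_one_left (norm_nonneg _) hφ

theorem HolOnDisc.diffContOnCl {E : Type*} [NormedAddCommGroup E] [NormedSpace ℂ E]
    {γ : ℂ → E} (hγ : HolOnDisc γ) : DiffContOnCl ℂ γ (ball 0 1) :=
  let ⟨_, _, hsub, hdiff⟩ := hγ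
  hdiff.diffContOnCl_ball hsub

theorem strictly_convex_implies_strictly_psh_general {E : Type*} [NormedAddCommGroup E]
    [NormedSpace ℂ E]
    (hconv : ∀ v w : E, (∀ t ∈ Icc (-1 : ℝ) 1, ‖v + t • w‖ = 1) → w = 0) :
    ∀ γ : ℂ → E, HolOnDisc γ → (∀ z ∈ closedBall (0 : ℂ) 1, ‖γ z‖ = 1) →
      Set.EqOn γ (fun _ => γ 0) (closedBall (0 : ℂ) 1) := by
  intro γ hγ hsph z hz
  have := strictConvexSpace_of_segment_sphere hconv
  have hγ0 : ‖γ 0‖ = 1 := hsph 0 (mem_closedBall_self zero_le_one)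
  obtain ⟨φ, hφ, hφγ0⟩ := exists_dual_vector ℂ (γ 0) (by rw [hγ0]; exact one_ne_zero)
  have hmax : IsMaxOn (norm ∘ fun w => φ (γ w)) (ball 0 1) 0 := fun w hw => by
    calc ‖φ (γ w)‖ ≤ ‖φ‖ * ‖γ w‖ := φ.le_opNorm _
      _ = ‖φ (γ 0)‖ := by rw [hφ, hsph w (ball_subset_closedBall hw), hφγ0, hγ0]; simp
  have hφγz : φ (γ z) = φ (γ 0) :=
    Complex.eqOn_closedBall_of_isMaxOn_norm (φ.differentiable.comp_diffContOnCl hγ.diffContOnCl)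
      hmax hz
  have hnorm : ‖γ z‖ = ‖γ 0‖ := by rw [hsph z hz, hγ0]
  exact eq_of_norm_eq_of_norm_add_eq hnorm
    (norm_add_eq_of_apply_eq_norm hφ.le (by rw [hφγz, hφγ0, hnorm]) hφγ0)

/-- A complex Banach space that is strictly convex as a real Banach space (every affine
map `[-1,1] → E` with image in the unit sphere is constant) is strictly
plurisubharmonic: every holomorphic map from the closed unit disc with image in the
unit sphere is constant. -/
theorem strictly_convex_implies_strictly_psh {E : Type*} [NormedAddCommGroup E]
    [NormedSpace ℂ E] [CompleteSpace E]
    (hconv : ∀ v w : E, (∀ t ∈ Icc (-1 : ℝ) 1, ‖v + t • w‖ = 1) → w = 0) :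
    ∀ γ : ℂ → E, HolOnDisc γ → (∀ z ∈ closedBall (0 : ℂ) 1, ‖γ z‖ = 1) →
      Set.EqOn γ (fun _ => γ 0) (closedBall (0 : ℂ) 1) :=
  strictly_convex_implies_strictly_psh_general hconv
end

section
/- Let E be a real Banach space and 1 < p < ∞, and suppose E is strictly convex. Then for any σ-finite measure space (S,Σ,μ), the Bochner space L^p(S,Σ,μ;E) is strictly convex. Conversely, if μ is non-zero and L^p(S,Σ,μ;E) is strictly convex, then E is strictly convex. -/
open MeasureTheory Set
open scoped ENNReal

/-- A normed real vector space is strictly convex in the sense that every affine map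
`[-1, 1] → E` with image in the unit sphere is constant. -/
def StrictlyConvexSp (E : Type*) [NormedAddCommGroup E] [NormedSpace ℝ E] : Prop :=
  ∀ v w : E, (∀ t ∈ Icc (-1 : ℝ) 1, ‖v + t • w‖ = 1) → w = 0

/-- Equality case in the triangle inequality for a strictly convex space. -/
lemma StrictlyConvexSp.eq_of_norm_add {E : Type*} [NormedAddCommGroup E] [NormedSpace ℝ E]
    (hE : StrictlyConvexSp E) {a b : E} (hab : ‖a‖ = ‖b‖) (hs : ‖a + b‖ = ‖a‖ + ‖b‖) :
    a = b := by
  rcases eq_or_ne ‖a‖ 0 with h0 | h0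
  · have ha : a = 0 := norm_eq_zero.mp h0
    have hb : b = 0 := norm_eq_zero.mp (hab ▸ h0)
    rw [ha, hb]
  · have hr : 0 < ‖a‖ := lt_of_le_of_ne (norm_nonneg a) (Ne.symm h0)
    set r : ℝ := ‖a‖ with hrdef
    set v : E := (2 * r)⁻¹ • (a + b) with hv
    set w : E := (2 * r)⁻¹ • (a - b) with hw
    have h2r : (0:ℝ) < 2 * r := by linarith
    have hub : ∀ t ∈ Icc (-1 : ℝ) 1, ‖v + t • w‖ ≤ 1 := by
      intro t ht
      have hco : v + t • w = (2 * r)⁻¹ • ((1 + t) • a + (1 - t) • b) := by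
        rw [hv, hw]; module
      rw [hco, norm_smul]
      have h1 : ‖(1 + t) • a + (1 - t) • b‖ ≤ (1 + t) * r + (1 - t) * r := by
        refine (norm_add_le _ _).trans ?_
        rw [norm_smul, norm_smul, Real.norm_eq_abs, Real.norm_eq_abs,
          abs_of_nonneg (by linarith [ht.1] : (0:ℝ) ≤ 1 + t),
          abs_of_nonneg (by linarith [ht.2] : (0:ℝ) ≤ 1 - t), ← hab, ← hrdef]
      have : (1 + t) * r + (1 - t) * r = 2 * r := by ring
      rw [this] at h1
      calc ‖(2 * r)⁻¹‖ * ‖(1 + t) • a + (1 - t) • b‖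
          ≤ ‖(2 * r)⁻¹‖ * (2 * r) := by
            exact mul_le_mul_of_nonneg_left h1 (norm_nonneg _)
        _ = 1 := by
            rw [Real.norm_eq_abs, abs_of_pos (by positivity)]
            field_simp
    have hnv : ‖v‖ = 1 := by
      rw [hv, norm_smul, Real.norm_eq_abs, abs_of_pos (by positivity), hs, ← hab]
      field_simp; ring
    have key : ∀ t ∈ Icc (-1 : ℝ) 1, ‖v + t • w‖ = 1 := by
      intro t ht
      refine le_antisymm (hub t ht) ?_
      have htneg : -t ∈ Icc (-1 : ℝ) 1 := by
        constructor <;> [linarith [ht.2]; linarith [ht.1]]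
      have h2 : (2:ℝ) ≤ ‖v + t • w‖ + ‖v + (-t) • w‖ := by
        have : v + v = (v + t • w) + (v + (-t) • w) := by module
        have h3 : ‖v + v‖ ≤ ‖v + t • w‖ + ‖v + (-t) • w‖ := this ▸ norm_add_le _ _
        have h4 : ‖v + v‖ = 2 := by
          have : v + v = (2:ℝ) • v := by module
          rw [this, norm_smul, hnv, Real.norm_eq_abs]; norm_num
        linarith
      linarith [hub (-t) htneg]
    have hw0 := hE v w key
    have h2rne : ((2 * r)⁻¹ : ℝ) ≠ 0 := by positivity
    have : a - b = 0 := by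
      rcases smul_eq_zero.mp (hw ▸ hw0) with h | h
      · exact absurd h h2rne
      · exact h
    exact sub_eq_zero.mp this

lemma StrictlyConvexSp.zero_of_eq {E : Type*} [NormedAddCommGroup E] [NormedSpace ℝ E]
    (hE : StrictlyConvexSp E) {x y : E}
    (h1 : ‖x + y‖ = ‖x - y‖) (h2 : 2 * ‖x‖ = ‖x + y‖ + ‖x - y‖) : y = 0 := by
  have heq : x + y = x - y := by
    refine hE.eq_of_norm_add h1 ?_
    have hxy : (x + y) + (x - y) = (2:ℝ) • x := by module
    rw [hxy, norm_smul, Real.norm_eq_abs, ← h2]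
    norm_num
  have h2y : (2:ℝ) • y = 0 := by
    have : (x + y) - (x - y) = (2:ℝ) • y := by module
    rw [← this, heq, sub_self]
  rcases smul_eq_zero.mp h2y with h | h
  · norm_num at h
  · exact h

/-- **Strict convexity of Bochner spaces.** For `1 < p < ∞` and a σ-finite measure, if
a real Banach space `E` is strictly convex then so is `L^p(S, μ; E)`; conversely, if
`μ ≠ 0` and `L^p(S, μ; E)` is strictly convex then so is `E`. -/
theorem strictly_convex_Lp {E : Type*} [NormedAddCommGroup E] [NormedSpace ℝ E]
    [CompleteSpace E]
    {S : Type*} [MeasurableSpace S] (μ : Measure S) [SigmaFinite μ]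
    (p : ℝ≥0∞) [Fact (1 ≤ p)] (hp : 1 < p) (hp' : p ≠ ∞) :
    (StrictlyConvexSp E → StrictlyConvexSp (Lp E p μ)) ∧
    (μ ≠ 0 → StrictlyConvexSp (Lp E p μ) → StrictlyConvexSp E) := by
  have hp0 : p ≠ 0 := (lt_trans zero_lt_one hp).ne'
  set q : ℝ := p.toReal with hqdef
  have hq1 : (1:ℝ) < q := by
    have := (ENNReal.toReal_lt_toReal ENNReal.one_ne_top hp').mpr hp
    simpa using this
  have hq0 : (0:ℝ) < q := lt_trans zero_lt_one hq1
  constructor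
  · -- forward direction
    intro hE f g hfg
    -- the norm-one hypotheses at t = 1, -1, 0
    have h1 : ‖f + g‖ = 1 := by
      have := hfg 1 ⟨by norm_num, le_refl 1⟩
      rwa [one_smul] at this
    have hm1 : ‖f - g‖ = 1 := by
      have := hfg (-1) ⟨le_refl _, by norm_num⟩
      rwa [neg_one_smul, ← sub_eq_add_neg] at this
    have h0 : ‖f‖ = 1 := by
      have := hfg 0 ⟨by norm_num, by norm_num⟩
      rwa [zero_smul, add_zero] at this
    -- turn norms into integrals
    have hint : ∀ h : Lp E p μ, ‖h‖ = 1 → ∫ s, ‖h s‖ ^ q ∂μ = 1 := by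
      intro h hh
      have hm := Lp.memLp h
      rw [Lp.norm_def, hm.eLpNorm_eq_integral_rpow_norm hp0 hp',
        ENNReal.toReal_ofReal (by positivity)] at hh
      have hnn : 0 ≤ ∫ s, ‖h s‖ ^ q ∂μ := integral_nonneg fun s => by positivity
      have := congrArg (· ^ q) hh
      simpa [← hqdef, Real.rpow_inv_rpow hnn hq0.ne', Real.one_rpow] using this
    have I1 : ∫ s, ‖f s + g s‖ ^ q ∂μ = 1 := by
      rw [← hint (f + g) h1]
      exact integral_congr_ae <| by
        filter_upwards [Lp.coeFn_add f g] with s hs; rw [hs]; rfl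
    have Im1 : ∫ s, ‖f s - g s‖ ^ q ∂μ = 1 := by
      rw [← hint (f - g) hm1]
      exact integral_congr_ae <| by
        filter_upwards [Lp.coeFn_sub f g] with s hs; rw [hs]; rfl
    have I0 : ∫ s, ‖f s‖ ^ q ∂μ = 1 := hint f h0
    -- integrability
    have intA : Integrable (fun s => ‖f s + g s‖ ^ q) μ := by
      refine ((Lp.memLp (f + g)).integrable_norm_rpow hp0 hp').congr ?_
      filter_upwards [Lp.coeFn_add f g] with s hs; rw [hs]; rfl
    have intB : Integrable (fun s => ‖f s - g s‖ ^ q) μ := by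
      refine ((Lp.memLp (f - g)).integrable_norm_rpow hp0 hp').congr ?_
      filter_upwards [Lp.coeFn_sub f g] with s hs; rw [hs]; rfl
    have intC : Integrable (fun s => ‖f s‖ ^ q) μ :=
      (Lp.memLp f).integrable_norm_rpow hp0 hp'
    -- the nonnegative defect function
    set G : S → ℝ := fun s => ‖f s + g s‖ ^ q + ‖f s - g s‖ ^ q - 2 * ‖f s‖ ^ q with hGdef
    -- pointwise convexity inequalities
    have hmid : ∀ s : S, ‖f s‖ ≤ (‖f s + g s‖ + ‖f s - g s‖) / 2 := by
      intro s
      have : (f s + g s) + (f s - g s) = (2:ℝ) • (f s) := by module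
      have h := norm_add_le (f s + g s) (f s - g s)
      rw [this, norm_smul, Real.norm_eq_abs] at h
      have : |(2:ℝ)| = 2 := by norm_num
      rw [this] at h
      linarith
    have hconv : ∀ a b : ℝ, 0 ≤ a → 0 ≤ b → ((a + b) / 2) ^ q ≤ (a ^ q + b ^ q) / 2 := by
      intro a b ha hb
      have := (strictConvexOn_rpow hq1).convexOn.2 (mem_Ici.mpr ha) (mem_Ici.mpr hb)
        (by norm_num : (0:ℝ) ≤ 1/2) (by norm_num : (0:ℝ) ≤ 1/2) (by norm_num)
      simp only [smul_eq_mul] at this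
      calc ((a + b) / 2) ^ q = (1/2 * a + 1/2 * b) ^ q := by ring_nf
        _ ≤ 1/2 * a ^ q + 1/2 * b ^ q := this
        _ = (a ^ q + b ^ q) / 2 := by ring
    have hGnonneg : ∀ s, 0 ≤ G s := by
      intro s
      have hc := hconv ‖f s + g s‖ ‖f s - g s‖ (norm_nonneg _) (norm_nonneg _)
      have hmono : ‖f s‖ ^ q ≤ ((‖f s + g s‖ + ‖f s - g s‖) / 2) ^ q :=
        Real.rpow_le_rpow (norm_nonneg _) (hmid s) hq0.le
      simp only [hGdef]
      linarith
    have hGint : Integrable G μ := by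
      exact (intA.add intB).sub (intC.const_mul 2)
    have hGzero : ∫ s, G s ∂μ = 0 := by
      have e1 : ∫ s, G s ∂μ =
          (∫ s, (‖f s + g s‖ ^ q + ‖f s - g s‖ ^ q) ∂μ) - ∫ s, 2 * ‖f s‖ ^ q ∂μ :=
        integral_sub (intA.add intB) (intC.const_mul 2)
      have e2 : (∫ s, (‖f s + g s‖ ^ q + ‖f s - g s‖ ^ q) ∂μ) =
          (∫ s, ‖f s + g s‖ ^ q ∂μ) + ∫ s, ‖f s - g s‖ ^ q ∂μ := integral_add intA intB
      have e3 : (∫ s, 2 * ‖f s‖ ^ q ∂μ) = 2 * ∫ s, ‖f s‖ ^ q ∂μ :=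
        integral_const_mul 2 _
      rw [e1, e2, e3, I1, Im1, I0]; ring
    have hae : G =ᵐ[μ] 0 := (integral_eq_zero_iff_of_nonneg hGnonneg hGint).mp hGzero
    -- conclude g = 0 a.e.
    have hg0 : (⇑g : S → E) =ᵐ[μ] 0 := by
      filter_upwards [hae] with s hs
      simp only [hGdef, Pi.zero_apply] at hs ⊢
      set a : ℝ := ‖f s + g s‖ with hadef
      set b : ℝ := ‖f s - g s‖ with hbdef
      set c : ℝ := ‖f s‖ with hcdef
      have ha : 0 ≤ a := norm_nonneg _
      have hb : 0 ≤ b := norm_nonneg _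
      have hc : 0 ≤ c := norm_nonneg _
      have hceq : a ^ q + b ^ q = 2 * c ^ q := by linarith
      have hcm : c ≤ (a + b) / 2 := hmid s
      -- first, a = b
      have hab : a = b := by
        by_contra hne
        have hstrict : ((1:ℝ)/2 * a + 1/2 * b) ^ q < 1/2 * a ^ q + 1/2 * b ^ q := by
          have := (strictConvexOn_rpow hq1).2 (mem_Ici.mpr ha) (mem_Ici.mpr hb) hne
            (by norm_num : (0:ℝ) < 1/2) (by norm_num : (0:ℝ) < 1/2) (by norm_num)
          simpa [smul_eq_mul] using this
        have h5 : c ^ q ≤ ((a + b) / 2) ^ q :=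
          Real.rpow_le_rpow hc hcm hq0.le
        have h6 : ((a + b) / 2) ^ q = (1/2 * a + 1/2 * b) ^ q := by ring_nf
        nlinarith [h5, hstrict, hceq]
      -- next, c = a
      have hca : c = a := by
        have hcq : c ^ q = a ^ q := by rw [hab] at hceq; linarith
        rcases lt_trichotomy c a with h | h | h
        · exact absurd hcq (ne_of_lt (Real.rpow_lt_rpow hc h hq0))
        · exact h
        · exact absurd hcq.symm (ne_of_lt (Real.rpow_lt_rpow ha h hq0))
      -- apply strict convexity of E pointwise
      exact hE.zero_of_eq (x := f s) (y := g s) (hab) (by rw [← hadef, ← hbdef, ← hcdef]; rw [hca, hab]; ring)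
    exact Lp.eq_zero_iff_ae_eq_zero.mpr hg0
  · -- backward direction
    intro hμ hL v w hvw
    obtain ⟨n, hn⟩ : ∃ n, μ (spanningSets μ n) ≠ 0 := by
      by_contra h
      push_neg at h
      apply hμ
      have huniv : μ univ = 0 := by
        rw [← iUnion_spanningSets μ]
        exact measure_iUnion_null h
      exact Measure.measure_univ_eq_zero.mp huniv
    set A : Set S := spanningSets μ n with hAdef
    have hA : MeasurableSet A := measurableSet_spanningSets μ n
    have hAfin : μ A ≠ ∞ := (measure_spanningSets_lt_top μ n).ne
    set r : ℝ := (μ A).toReal ^ (1 / q) with hrdef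
    have hApos : 0 < (μ A).toReal := ENNReal.toReal_pos hn hAfin
    have hr : 0 < r := Real.rpow_pos_of_pos hApos _
    have hsmul : ∀ (t : ℝ) (x : E),
        t • indicatorConstLp p hA hAfin x = indicatorConstLp p hA hAfin (t • x) := by
      intro t x
      apply Lp.ext
      filter_upwards [Lp.coeFn_smul t (indicatorConstLp p hA hAfin x),
        indicatorConstLp_coeFn (p := p) (hs := hA) (hμs := hAfin) (c := x),
        indicatorConstLp_coeFn (p := p) (hs := hA) (hμs := hAfin) (c := t • x)] with s hs1 hs2 hs3
      rw [hs1, Pi.smul_apply, hs2, hs3]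
      by_cases hsA : s ∈ A
      · simp [Set.indicator_of_mem hsA]
      · simp [Set.indicator_of_notMem hsA]
    have hnormJ : ∀ x : E, ‖indicatorConstLp p hA hAfin x‖ = ‖x‖ * r := by
      intro x
      rw [norm_indicatorConstLp hp0 hp', hrdef, hqdef]
      rfl
    set V : Lp E p μ := indicatorConstLp p hA hAfin (r⁻¹ • v) with hV
    set W : Lp E p μ := indicatorConstLp p hA hAfin (r⁻¹ • w) with hW
    have hkey : ∀ t ∈ Icc (-1:ℝ) 1, ‖V + t • W‖ = 1 := by
      intro t ht
      rw [hV, hW, hsmul, indicatorConstLp_add, hnormJ]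
      have harg : r⁻¹ • v + t • r⁻¹ • w = r⁻¹ • (v + t • w) := by module
      rw [harg, norm_smul, hvw t ht, Real.norm_eq_abs, abs_of_pos (by positivity)]
      field_simp
    have hW0 := hL V W hkey
    have : ‖W‖ = 0 := by rw [hW0, norm_zero]
    rw [hW, hnormJ, norm_smul, Real.norm_eq_abs, abs_of_pos (by positivity)] at this
    have hwn : ‖w‖ = 0 := by
      have hrne : r ≠ 0 := hr.ne'
      have h1 : r⁻¹ * ‖w‖ * r = ‖w‖ := by field_simp
      rwa [h1] at this
    exact norm_eq_zero.mp hwn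
end

section
/- Day's lemma: let E be a strictly convex real Banach space, (S,Σ,μ) a probability space, and η : S → E Bochner integrable. Then ‖∫η dμ‖ ≤ ∫‖η‖ dμ, and if equality holds and ‖η(s)‖ is constant in s, then η is constant almost everywhere. -/
open MeasureTheory Set

lemma strictlyConvexSp_eq {E : Type*} [NormedAddCommGroup E] [NormedSpace ℝ E]
    (hE : StrictlyConvexSp E) {c : ℝ} (hc : 0 < c) {x y : E}
    (hx : ‖x‖ = c) (hy : ‖y‖ = c) (hxy : ‖x + y‖ = 2 * c) : x = y := by
  have h2c : (2 * c) ≠ 0 := by positivity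
  have key : ∀ t ∈ Icc (-1 : ℝ) 1,
      ‖(2*c)⁻¹ • (x+y) + t • ((2*c)⁻¹ • (x - y))‖ = 1 := by
    intro t ht
    have h1 : (2*c)⁻¹ • (x+y) + t • ((2*c)⁻¹ • (x - y))
        = (2*c)⁻¹ • ((1+t) • x + (1-t) • y) := by
      module
    rw [h1, norm_smul]
    have ht1 : 0 ≤ 1 + t := by linarith [ht.1]
    have ht2 : 0 ≤ 1 - t := by linarith [ht.2]
    have hN : ‖(1+t) • x + (1-t) • y‖ = 2 * c := by
      have hle : ‖(1+t) • x + (1-t) • y‖ ≤ 2 * c := by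
        calc ‖(1+t) • x + (1-t) • y‖ ≤ ‖(1+t) • x‖ + ‖(1-t) • y‖ := norm_add_le _ _
        _ = (1+t)*c + (1-t)*c := by
            rw [norm_smul, norm_smul, Real.norm_of_nonneg ht1, Real.norm_of_nonneg ht2, hx, hy]
        _ = 2*c := by ring
      have hge : 2 * c ≤ ‖(1+t) • x + (1-t) • y‖ := by
        rcases le_or_gt 0 t with h0 | h0
        · have hdec : (1+t) • (x + y) = ((1+t) • x + (1-t) • y) + (2*t) • y := by module
          have h3 : ‖(1+t) • (x+y)‖ ≤ ‖(1+t) • x + (1-t) • y‖ + ‖(2*t) • y‖ := by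
            rw [hdec]; exact norm_add_le _ _
          rw [norm_smul, norm_smul, Real.norm_of_nonneg ht1,
            Real.norm_of_nonneg (by linarith), hxy, hy] at h3
          nlinarith
        · have hdec : (1-t) • (x + y) = ((1+t) • x + (1-t) • y) + (-(2*t)) • x := by module
          have h3 : ‖(1-t) • (x+y)‖ ≤ ‖(1+t) • x + (1-t) • y‖ + ‖(-(2*t)) • x‖ := by
            rw [hdec]; exact norm_add_le _ _
          rw [norm_smul, norm_smul, Real.norm_of_nonneg ht2,
            Real.norm_of_nonneg (by linarith), hxy, hx] at h3
          nlinarith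
      linarith
    rw [hN, Real.norm_of_nonneg (by positivity)]
    field_simp
  have hw := hE _ _ key
  rcases smul_eq_zero.mp hw with h | h
  · exact absurd h (inv_ne_zero h2c)
  · exact sub_eq_zero.mp h

/-- **Day's lemma.** For a strictly convex real Banach space `E`, a probability measure
`μ`, and a Bochner-integrable `η : S → E`, one has `‖∫ η‖ ≤ ∫ ‖η‖`; if equality holds
and `‖η‖` is constant, then `η` is a.e. constant. -/
theorem day_lemma {E : Type*} [NormedAddCommGroup E] [NormedSpace ℝ E]
    [CompleteSpace E] (hE : StrictlyConvexSp E)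
    {S : Type*} [MeasurableSpace S] (μ : Measure S) [IsProbabilityMeasure μ]
    (η : S → E) (hη : Integrable η μ) :
    ‖∫ s, η s ∂μ‖ ≤ ∫ s, ‖η s‖ ∂μ ∧
    (∀ c : ℝ, (∀ s, ‖η s‖ = c) → ‖∫ s, η s ∂μ‖ = ∫ s, ‖η s‖ ∂μ →
      ∀ᵐ s ∂μ, η s = ∫ t, η t ∂μ) := by
  refine ⟨norm_integral_le_integral_norm η, ?_⟩
  intro c hc heq
  set m : E := ∫ t, η t ∂μ with hm
  have hint_norm : ∫ s, ‖η s‖ ∂μ = c := by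
    simp only [hc]
    simp
  have hmnorm : ‖m‖ = c := by rw [heq, hint_norm]
  by_cases hc0 : c = 0
  · have hz : ∀ s, η s = 0 := fun s => norm_eq_zero.mp (by rw [hc s, hc0])
    have hmz : m = 0 := norm_eq_zero.mp (by rw [hmnorm, hc0])
    filter_upwards with s
    rw [hz s, hmz]
  · have hcpos : 0 < c :=
      lt_of_le_of_ne (hmnorm ▸ norm_nonneg m) (fun h => hc0 h.symm)
    have hηm : Integrable (fun s => η s + m) μ := hη.add (integrable_const m)
    have hint2 : ∫ s, (η s + m) ∂μ = m + m := by
      rw [integral_add hη (integrable_const m), integral_const]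
      simp [hm]
    have hge : 2 * c ≤ ∫ s, ‖η s + m‖ ∂μ := by
      have h1 : ‖∫ s, (η s + m) ∂μ‖ ≤ ∫ s, ‖η s + m‖ ∂μ :=
        norm_integral_le_integral_norm _
      rw [hint2] at h1
      have h2 : ‖m + m‖ = 2 * c := by
        rw [← two_smul ℝ m, norm_smul, Real.norm_ofNat, hmnorm]
      linarith
    have hle : ∀ s, ‖η s + m‖ ≤ 2 * c := fun s => by
      calc ‖η s + m‖ ≤ ‖η s‖ + ‖m‖ := norm_add_le _ _
      _ = 2 * c := by rw [hc s, hmnorm]; ring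
    set g : S → ℝ := fun s => 2 * c - ‖η s + m‖ with hg
    have hgnn : 0 ≤ g := fun s => by simp [hg]; exact hle s
    have hgint : Integrable g μ := (integrable_const (2*c)).sub hηm.norm
    have hgzero : ∫ s, g s ∂μ = 0 := by
      have : ∫ s, g s ∂μ = 2 * c - ∫ s, ‖η s + m‖ ∂μ := by
        rw [hg]
        rw [integral_sub (integrable_const (2*c)) hηm.norm, integral_const]
        simp
      have hnn : 0 ≤ ∫ s, g s ∂μ := integral_nonneg hgnn
      linarith [hge, this ▸ hnn, this]
    have hae : g =ᵐ[μ] 0 := (integral_eq_zero_iff_of_nonneg hgnn hgint).mp hgzero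
    filter_upwards [hae] with s hs
    have hnorm : ‖η s + m‖ = 2 * c := by
      have : 2 * c - ‖η s + m‖ = 0 := hs
      linarith
    exact strictlyConvexSp_eq hE hcpos (hc s) hmnorm hnorm
end

section
/- Lifting lemma for holomorphic curves in Bochner spaces: let E be a complex Banach space, (S,Σ,μ) a measure space, 1 ≤ p < ∞, and γ : D̄ → L^p(S,μ;E) a map holomorphic on a neighbourhood of the closed unit disc. Then there exists a map γ̃ assigning to each z ∈ D̄ a strongly measurable representative γ̃(z) : S → E of γ(z), such that for almost every s ∈ S the map z ↦ γ̃(z)(s) is holomorphic on D̄ (given by a power series ∑ zⁿ γ̃ₙ(s) converging on a disc of radius r > 1). -/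
open MeasureTheory Metric Set

open scoped ENNReal

open Filter
open scoped NNReal Topology

set_option maxHeartbeats 1000000 in
theorem ae_summable_of_summable_norm' {E : Type*} [NormedAddCommGroup E]
    {S : Type*} [MeasurableSpace S] {μ : Measure S} {p : ℝ≥0∞}
    (hp1 : 1 ≤ p) (hp' : p ≠ ∞) {c : ℕ → Lp E p μ} {ct : ℕ → S → E}
    (hctm : ∀ n, StronglyMeasurable (ct n)) (hct : ∀ n, ⇑(c n) =ᵐ[μ] ct n)
    {ρ : ℝ} (hρ : 0 ≤ ρ) (hsum : Summable fun n => ‖c n‖ * ρ ^ n) :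
    ∀ᵐ s ∂μ, Summable fun n => ρ ^ n * ‖ct n s‖ := by
  have hnn : ∀ n, (0:ℝ) ≤ ‖c n‖ := fun n => by
    rw [Lp.norm_def]; exact ENNReal.toReal_nonneg
  have hp0 : p ≠ 0 := (lt_of_lt_of_le zero_lt_one hp1).ne'
  set q := p.toReal with hqdef
  have hq0 : 0 < q := ENNReal.toReal_pos hp0 hp'
  set ρ' : ℝ≥0 := ρ.toNNReal with hρ'def
  have hρ'c : (ρ' : ℝ) = ρ := Real.coe_toNNReal ρ hρ
  have hCeq : ENNReal.ofReal (∑' n, ‖c n‖ * ρ ^ n)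
      = ∑' n, ENNReal.ofReal (‖c n‖ * ρ ^ n) :=
    ENNReal.ofReal_tsum_of_nonneg (fun n => mul_nonneg (hnn n) (pow_nonneg hρ n)) hsum
  set C : ℝ≥0∞ := ∑' n, ENNReal.ofReal (‖c n‖ * ρ ^ n) with hCdef
  have hC : C ≠ ∞ := by rw [← hCeq]; exact ENNReal.ofReal_ne_top
  set term : ℕ → S → ℝ≥0∞ := fun n s => (ρ' : ℝ≥0∞) ^ n * ‖ct n s‖₊ with htermdef
  have hterm : ∀ n, Measurable (term n) := fun n => (hctm n).enorm.const_mul _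
  set F : S → ℝ≥0∞ := fun s => ∑' n, term n s with hFdef
  have hF : Measurable F := Measurable.ennreal_tsum hterm
  have key : ∀ N, ∫⁻ s, (∑ n ∈ Finset.range N, term n s) ^ q ∂μ ≤ C ^ q := by
    intro N
    set G : S → ℝ := fun s => ∑ n ∈ Finset.range N, ρ ^ n * ‖ct n s‖ with hGdef
    have hG1 : ∀ s, (∑ n ∈ Finset.range N, term n s) = (‖G s‖₊ : ℝ≥0∞) := by
      intro s
      rw [← enorm_eq_nnnorm, Real.enorm_eq_ofReal
          (Finset.sum_nonneg fun i _ => mul_nonneg (pow_nonneg hρ i) (norm_nonneg _)),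
        ENNReal.ofReal_sum_of_nonneg
          (fun i _ => mul_nonneg (pow_nonneg hρ i) (norm_nonneg _))]
      refine Finset.sum_congr rfl fun n _ => ?_
      rw [ENNReal.ofReal_mul (pow_nonneg hρ n), ofReal_norm, ← hρ'c,
        ← NNReal.coe_pow, ENNReal.ofReal_coe_nnreal, ENNReal.coe_pow]
      rfl
    have hGm : ∫⁻ s, (∑ n ∈ Finset.range N, term n s) ^ q ∂μ = (eLpNorm G p μ) ^ q := by
      rw [eLpNorm_eq_lintegral_rpow_enorm_toReal hp0 hp', ← ENNReal.rpow_mul, one_div,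
        inv_mul_cancel₀ hq0.ne', ENNReal.rpow_one]
      exact lintegral_congr fun s => by rw [hG1 s, enorm_eq_nnnorm]
    have hbound : eLpNorm G p μ ≤ C := by
      have hGeq : G = ∑ n ∈ Finset.range N, (ρ ^ n) • (fun s => ‖ct n s‖) := by
        funext s; simp [hGdef, smul_eq_mul]
      calc eLpNorm G p μ
          ≤ ∑ n ∈ Finset.range N, eLpNorm ((ρ ^ n) • (fun s => ‖ct n s‖)) p μ := by
            rw [hGeq]
            exact eLpNorm_sum_le
              (fun n _ => ((hctm n).norm.aestronglyMeasurable.const_smul _)) hp1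
        _ = ∑ n ∈ Finset.range N, ENNReal.ofReal (‖c n‖ * ρ ^ n) := by
            refine Finset.sum_congr rfl fun n _ => ?_
            rw [eLpNorm_const_smul, eLpNorm_norm, eLpNorm_congr_ae (hct n).symm, Lp.norm_def,
              ENNReal.ofReal_mul ENNReal.toReal_nonneg,
              ENNReal.ofReal_toReal (Lp.eLpNorm_ne_top _),
              Real.enorm_eq_ofReal (pow_nonneg hρ n)]
            exact mul_comm _ _
        _ ≤ ∑' n, ENNReal.ofReal (‖c n‖ * ρ ^ n) :=
            ENNReal.sum_le_tsum _
        _ = C := rfl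
    rw [hGm]
    exact ENNReal.rpow_le_rpow hbound hq0.le
  have hmono : ∀ᵐ s ∂μ, Monotone fun N => (∑ n ∈ Finset.range N, term n s) ^ q :=
    Eventually.of_forall fun s M N h =>
      ENNReal.rpow_le_rpow (Finset.sum_le_sum_of_subset (Finset.range_subset_range.2 h)) hq0.le
  have htends : ∀ᵐ s ∂μ,
      Tendsto (fun N => (∑ n ∈ Finset.range N, term n s) ^ q) atTop (𝓝 (F s ^ q)) :=
    Eventually.of_forall fun s => (ENNReal.tendsto_nat_tsum _).ennrpow_const q
  have hlim := lintegral_tendsto_of_tendsto_of_monotone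
    (fun N => ((Finset.measurable_sum _ fun n _ => hterm n).pow_const q).aemeasurable)
    hmono htends
  have hle : ∫⁻ s, F s ^ q ∂μ ≤ C ^ q := le_of_tendsto hlim (Eventually.of_forall key)
  have hfin : ∀ᵐ s ∂μ, F s ^ q < ∞ :=
    ae_lt_top (hF.pow_const q)
      (ne_top_of_le_ne_top (ENNReal.rpow_ne_top_of_nonneg hq0.le hC) hle)
  filter_upwards [hfin] with s hs
  have hFs : F s ≠ ∞ := by
    intro h
    rw [h, ENNReal.top_rpow_of_pos hq0] at hs
    exact lt_irrefl _ hs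
  have h1 : Summable fun n => ρ' ^ n * ‖ct n s‖₊ := by
    rw [← ENNReal.tsum_coe_ne_top_iff_summable]
    have : ∑' n, ((ρ' ^ n * ‖ct n s‖₊ : ℝ≥0) : ℝ≥0∞) = F s :=
      tsum_congr fun n => by push_cast; rfl
    rw [this]; exact hFs
  have h2 := NNReal.summable_coe.2 h1
  refine h2.congr fun n => ?_
  push_cast [hρ'c]
  rfl

set_option maxHeartbeats 1000000 in
/-- **Lifting lemma for holomorphic curves in Bochner spaces.** If
`γ : D̄ → L^p(S, μ; E)` is holomorphic on a neighbourhood of the closed unit disc, then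
there is a choice `γ̃` of strongly measurable representatives of the `γ z` such that
for almost every `s`, the map `z ↦ γ̃ z s` is holomorphic on a disc of radius `r > 1`. -/
theorem holomorphic_lifting_Lp {E : Type*} [NormedAddCommGroup E] [NormedSpace ℂ E]
    [CompleteSpace E]
    {S : Type*} [MeasurableSpace S] (μ : Measure S)
    (p : ℝ≥0∞) [Fact (1 ≤ p)] (hp' : p ≠ ∞)
    (γ : ℂ → Lp E p μ) (hγ : HolOnDisc γ) :
    ∃ γt : ℂ → S → E,
      (∀ z ∈ closedBall (0 : ℂ) 1, γt z =ᵐ[μ] (γ z : S → E)) ∧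
      ∃ r : ℝ, 1 < r ∧
        ∀ᵐ s ∂μ, DifferentiableOn ℂ (fun z => γt z s) (Metric.ball (0 : ℂ) r) := by
  classical
  have hp1 : 1 ≤ p := Fact.out
  have hp0 : p ≠ 0 := (lt_of_lt_of_le zero_lt_one hp1).ne'
  obtain ⟨U, hUo, hU1, hUd⟩ := hγ
  obtain ⟨δ, hδ, hthick⟩ :=
    (isCompact_closedBall (0 : ℂ) 1).exists_cthickening_subset_open hUo hU1
  have hRball : closedBall (0 : ℂ) (1 + δ) ⊆ U := by
    rw [add_comm, ← cthickening_closedBall hδ.le zero_le_one (0 : ℂ)]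
    exact hthick
  set R : ℝ≥0 := ⟨1 + δ, by positivity⟩ with hRdef
  have hRc : (R : ℝ) = 1 + δ := rfl
  have hR0 : 0 < R := by
    rw [← NNReal.coe_lt_coe, hRc, NNReal.coe_zero]; linarith
  have hdR : DifferentiableOn ℂ γ (closedBall (0 : ℂ) (R : ℝ)) := by
    refine hUd.mono ?_
    rw [hRc]; exact hRball
  have hP := hdR.hasFPowerSeriesOnBall hR0
  set P := cauchyPowerSeries γ 0 (R : ℝ) with hPdef
  set ρ : ℝ≥0 := ⟨1 + δ / 2, by positivity⟩ with hρdef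
  have hρc : (ρ : ℝ) = 1 + δ / 2 := rfl
  have hρR : (ρ : ℝ≥0∞) < P.radius := by
    refine lt_of_lt_of_le (ENNReal.coe_lt_coe.2 ?_) hP.r_le
    rw [← NNReal.coe_lt_coe, hρc, hRc]; linarith
  have hρ1 : (1 : ℝ) ≤ ρ := by rw [hρc]; linarith
  have hρpos : (0 : ℝ) ≤ ρ := le_trans zero_le_one hρ1
  set r : ℝ := 1 + δ / 4 with hrdef
  have hr1 : 1 < r := by rw [hrdef]; linarith
  have hrρ : r < (ρ : ℝ) := by rw [hrdef, hρc]; linarith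
  have hPsum : Summable fun n => ‖P n‖ * (ρ : ℝ) ^ n := P.summable_norm_mul_pow hρR
  set c : ℕ → Lp E p μ := fun n => P.coeff n with hcdef
  have hcle : ∀ n, ‖c n‖ ≤ ‖P n‖ := by
    intro n
    calc ‖c n‖ = ‖P n (fun _ => 1)‖ := rfl
      _ ≤ ‖P n‖ * ∏ _i : Fin n, ‖(1 : ℂ)‖ := (P n).le_opNorm _
      _ = ‖P n‖ := by simp
  have hcsum : Summable fun n => ‖c n‖ * (ρ : ℝ) ^ n :=
    hPsum.of_nonneg_of_le
      (fun n => mul_nonneg (norm_nonneg _) (pow_nonneg hρpos n))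
      (fun n => mul_le_mul_of_nonneg_right (hcle n) (pow_nonneg hρpos n))
  set ct : ℕ → S → E := fun n => (Lp.aestronglyMeasurable (c n)).mk _ with hctdef
  have hctm : ∀ n, StronglyMeasurable (ct n) :=
    fun n => (Lp.aestronglyMeasurable (c n)).stronglyMeasurable_mk
  have hct : ∀ n, ⇑(c n) =ᵐ[μ] ct n := fun n => (Lp.aestronglyMeasurable (c n)).ae_eq_mk
  have hGood := ae_summable_of_summable_norm' hp1 hp' hctm hct hρpos hcsum
  refine ⟨fun z s => ∑' n, z ^ n • ct n s, ?_, r, hr1, ?_⟩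
  · intro z hz
    have hz1 : ‖z‖ ≤ 1 := mem_closedBall_zero_iff.1 hz
    have hzsum : HasSum (fun n => z ^ n • c n) (γ z) := by
      have hmem : z ∈ Metric.eball (0 : ℂ) (R : ℝ≥0∞) := by
        rw [mem_emetric_ball_zero_iff]
        refine ENNReal.coe_lt_coe.2 ?_
        rw [← NNReal.coe_lt_coe, coe_nnnorm, hRc]
        linarith
      have h0 := hP.hasSum hmem
      simp only [zero_add] at h0
      have heq : (fun n => P n fun _ => z) = fun n => z ^ n • c n :=
        funext fun n => by rw [P.apply_eq_pow_smul_coeff]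
      rw [← heq]
      exact h0
    set T : ℕ → Lp E p μ := fun N => ∑ n ∈ Finset.range N, z ^ n • c n with hTdef
    have hTtend : Tendsto T atTop (𝓝 (γ z)) := hzsum.tendsto_sum_nat
    have h1 : Tendsto (fun N => eLpNorm (⇑(T N) - ⇑(γ z)) p μ) atTop (𝓝 0) := by
      have heq : ∀ N, eLpNorm (⇑(T N) - ⇑(γ z)) p μ = ENNReal.ofReal ‖T N - γ z‖ := by
        intro N
        rw [← eLpNorm_congr_ae (Lp.coeFn_sub (T N) (γ z)), Lp.norm_def,
          ENNReal.ofReal_toReal (Lp.eLpNorm_ne_top _)]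
      simp only [heq]
      have h2 : Tendsto (fun N => ‖T N - γ z‖) atTop (𝓝 0) :=
        (tendsto_iff_norm_sub_tendsto_zero).1 hTtend
      have h3 := (ENNReal.continuous_ofReal.tendsto 0).comp h2
      simpa [Function.comp_def] using h3
    have h2 := tendstoInMeasure_of_tendsto_eLpNorm hp0
      (fun N => Lp.aestronglyMeasurable (T N)) (Lp.aestronglyMeasurable (γ z)) h1
    obtain ⟨ns, hns, hae⟩ := h2.exists_seq_tendsto_ae
    have hTcoe : ∀ N, ⇑(T N) =ᵐ[μ] fun s => ∑ n ∈ Finset.range N, z ^ n • ct n s := by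
      intro N
      induction N with
      | zero =>
        simp only [hTdef, Finset.range_zero, Finset.sum_empty]
        exact Lp.coeFn_zero E p μ
      | succ N ih =>
        have hsucc : T (N + 1) = T N + z ^ N • c N := by
          rw [hTdef]; exact Finset.sum_range_succ _ N
        filter_upwards [Lp.coeFn_add (T N) (z ^ N • c N), Lp.coeFn_smul (z ^ N) (c N),
          ih, hct N] with s e1 e2 e3 e4
        rw [hsucc]
        calc (T N + z ^ N • c N : Lp E p μ) s
            = T N s + (z ^ N • c N : Lp E p μ) s := e1
          _ = ∑ n ∈ Finset.range N, z ^ n • ct n s + z ^ N • ct N s := by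
              rw [e3, e2, Pi.smul_apply, e4]
          _ = ∑ n ∈ Finset.range (N + 1), z ^ n • ct n s := (Finset.sum_range_succ _ N).symm
    have hTcoe' : ∀ᵐ s ∂μ, ∀ N, ⇑(T N) s = ∑ n ∈ Finset.range N, z ^ n • ct n s :=
      ae_all_iff.2 hTcoe
    filter_upwards [hGood, hae, hTcoe'] with s hgs hls hcs
    have hsum2 : Summable fun n => z ^ n • ct n s := by
      refine Summable.of_norm_bounded hgs ?_
      intro n
      rw [norm_smul, norm_pow]
      exact mul_le_mul_of_nonneg_right
        (pow_le_pow_left₀ (norm_nonneg z) (hz1.trans hρ1) n) (norm_nonneg _)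
    have hlim1 : Tendsto (fun i => ∑ n ∈ Finset.range (ns i), z ^ n • ct n s) atTop
        (𝓝 (∑' n, z ^ n • ct n s)) :=
      hsum2.hasSum.tendsto_sum_nat.comp hns.tendsto_atTop
    have hlim2 : Tendsto (fun i => ∑ n ∈ Finset.range (ns i), z ^ n • ct n s) atTop
        (𝓝 ((γ z : S → E) s)) := hls.congr fun i => hcs (ns i)
    exact tendsto_nhds_unique hlim1 hlim2
  · filter_upwards [hGood] with s hs
    set Q : FormalMultilinearSeries ℂ ℂ E :=
      fun n => ContinuousMultilinearMap.mkPiRing ℂ (Fin n) (ct n s) with hQdef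
    have hrad : (ρ : ℝ≥0∞) ≤ Q.radius := by
      refine Q.le_radius_of_summable_norm ?_
      refine hs.congr fun n => ?_
      rw [ContinuousMultilinearMap.norm_mkPiRing, mul_comm]
    have hQpos : 0 < Q.radius :=
      lt_of_lt_of_le (ENNReal.coe_pos.2 (by rw [← NNReal.coe_pos, hρc]; linarith)) hrad
    have hdiff := (Q.hasFPowerSeriesOnBall hQpos).differentiableOn
    have hsub : Metric.ball (0 : ℂ) r ⊆ Metric.eball (0 : ℂ) Q.radius := by
      intro x hx
      rw [mem_emetric_ball_zero_iff]
      refine lt_of_lt_of_le (ENNReal.coe_lt_coe.2 ?_) hrad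
      rw [← NNReal.coe_lt_coe, coe_nnnorm]
      exact (mem_ball_zero_iff.1 hx).trans hrρ
    have heq : (fun w => ∑' n, w ^ n • ct n s) = Q.sum := by
      funext w
      refine tsum_congr fun n => ?_
      rw [ContinuousMultilinearMap.mkPiRing_apply]
      simp [Finset.prod_const]
    show DifferentiableOn ℂ (fun w => ∑' n, w ^ n • ct n s) (Metric.ball (0 : ℂ) r)
    rw [heq]
    exact hdiff.mono hsub
end
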